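/- The natural point-distinguishing representation is functorial: let (P, L) and (Q, K) be set-representable orthomodular posets with natural representations f_L : L → L̃ and f_K : K → K̃. Then for every SOMP-morphism g : L → K there is a unique SOMP-morphism g̃ : L̃ → K̃ such that f_K ∘ g = g̃ ∘ f_L. -/
import Mathlib


/-- A set-representable orthomodular poset (SOMP): a collection `L` of subsets of `P`
containing the whole space, closed under complementation, and closed under unions of
disjoint members. -/
def IsSOMP {P : Type*} (L : Set (Set P)) : Prop :=
  Set.univ ∈ L ∧ (∀ A ∈ L, Aᶜ ∈ L) ∧
    ∀ A ∈ L, ∀ B ∈ L, A ∩ B = ∅ → A ∪ B ∈ L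

/-- The natural relation on `P`: `x R y` iff there is no `A ∈ L` with `x ∈ A` and `y ∉ A`. -/
def natRel {P : Type*} (L : Set (Set P)) (x y : P) : Prop :=
  ¬ ∃ A ∈ L, x ∈ A ∧ y ∉ A

/-- The class of `x` under the natural relation. -/
def eqClass {P : Type*} (L : Set (Set P)) (x : P) : Set P :=
  {y | natRel L x y}

/-- The set `P̃` of equivalence classes of the natural relation. -/
def Ptilde {P : Type*} (L : Set (Set P)) : Type _ :=
  {C : Set P // ∃ x, C = eqClass L x}

/-- The collection `L̃ = { {C ∈ P̃ : C ⊆ A} : A ∈ L }`. -/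
def Ltilde {P : Type*} (L : Set (Set P)) : Set (Set (Ptilde L)) :=
  {U | ∃ A ∈ L, U = {C : Ptilde L | C.1 ⊆ A}}

/-- The natural map `f : L → L̃`, `f(A) = {C ∈ P̃ : C ⊆ A}`. -/
def fmap {P : Type*} (L : Set (Set P)) (A : Set P) : Set (Ptilde L) :=
  {C : Ptilde L | C.1 ⊆ A}

/-- A SOMP-morphism from `(P, L)` to `(Q, K)` (acting on the set systems): it sends the
whole space to the whole space, members of `L` to members of `K`, preserves complements,
and preserves disjoint unions. -/
def IsSOMPMorphism {α β : Type*} (L : Set (Set α)) (K : Set (Set β))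
    (g : Set α → Set β) : Prop :=
  g Set.univ = Set.univ ∧ (∀ A ∈ L, g A ∈ K) ∧ (∀ A ∈ L, g Aᶜ = (g A)ᶜ) ∧
    ∀ A ∈ L, ∀ B ∈ L, A ∩ B = ∅ → g (A ∪ B) = g A ∪ g B

lemma mem_eqClass_self {P : Type*} (L : Set (Set P)) (x : P) : x ∈ eqClass L x :=
  fun ⟨_, _, hx, hnx⟩ => hnx hx

lemma eqClass_subset {P : Type*} {L : Set (Set P)} {A : Set P} (hA : A ∈ L) {x : P}
    (hx : x ∈ A) : eqClass L x ⊆ A := by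
  intro y hy
  by_contra h
  exact hy ⟨A, hA, hx, h⟩

/-- recovery map -/
def recoverSet {P : Type*} (L : Set (Set P)) (U : Set (Ptilde L)) : Set P :=
  {x | (⟨eqClass L x, x, rfl⟩ : Ptilde L) ∈ U}

lemma recover_fmap {P : Type*} {L : Set (Set P)} {A : Set P} (hA : A ∈ L) :
    recoverSet L (fmap L A) = A := by
  ext x
  constructor
  · intro h
    exact h (mem_eqClass_self L x)
  · intro h
    exact eqClass_subset hA h

lemma fmap_univ {P : Type*} (L : Set (Set P)) : fmap L Set.univ = Set.univ := by
  ext C; simp [fmap]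

lemma fmap_compl {P : Type*} {L : Set (Set P)} (hL : IsSOMP L) {A : Set P} (hA : A ∈ L) :
    fmap L Aᶜ = (fmap L A)ᶜ := by
  ext C
  obtain ⟨C, x, rfl⟩ := C
  constructor
  · intro h hA'
    exact h (mem_eqClass_self L x) (hA' (mem_eqClass_self L x))
  · intro h
    have hx : x ∉ A := fun hx => h (eqClass_subset hA hx)
    exact eqClass_subset (hL.2.1 A hA) hx

lemma fmap_union {P : Type*} {L : Set (Set P)} {A B : Set P} (hA : A ∈ L) (hB : B ∈ L) :
    fmap L (A ∪ B) = fmap L A ∪ fmap L B := by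
  ext C
  obtain ⟨C, x, rfl⟩ := C
  constructor
  · intro h
    rcases h (mem_eqClass_self L x) with hx | hx
    · exact Or.inl (eqClass_subset hA hx)
    · exact Or.inr (eqClass_subset hB hx)
  · rintro (h | h) y hy
    · exact Or.inl (h hy)
    · exact Or.inr (h hy)

lemma fmap_inj {P : Type*} {L : Set (Set P)} {A B : Set P} (hA : A ∈ L) (hB : B ∈ L)
    (h : fmap L A = fmap L B) : A = B := by
  rw [← recover_fmap hA, ← recover_fmap hB, h]

/-- The natural point-distinguishing representation is functorial: for
every SOMP-morphism `g : L → K` there is a unique SOMP-morphism `g̃ : L̃ → K̃` with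
`f_K ∘ g = g̃ ∘ f_L`. -/
theorem representation_functorial {P Q : Type*} (L : Set (Set P)) (K : Set (Set Q))
    (hL : IsSOMP L) (hK : IsSOMP K) (g : Set P → Set Q) (hg : IsSOMPMorphism L K g) :
    ∃ gt : Set (Ptilde L) → Set (Ptilde K),
      IsSOMPMorphism (Ltilde L) (Ltilde K) gt ∧
        (∀ A ∈ L, gt (fmap L A) = fmap K (g A)) ∧
        ∀ gt' : Set (Ptilde L) → Set (Ptilde K),
          IsSOMPMorphism (Ltilde L) (Ltilde K) gt' →
          (∀ A ∈ L, gt' (fmap L A) = fmap K (g A)) →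
          ∀ U ∈ Ltilde L, gt' U = gt U := by
  obtain ⟨hguniv, hgmem, hgcompl, hgunion⟩ := hg
  refine ⟨fun U => fmap K (g (recoverSet L U)), ⟨?_, ?_, ?_, ?_⟩, ?_, ?_⟩
  · beta_reduce
    rw [show (Set.univ : Set (Ptilde L)) = fmap L Set.univ from (fmap_univ L).symm,
      recover_fmap hL.1, hguniv, fmap_univ]
  · intro U hU
    obtain ⟨A, hA, hU⟩ := hU
    rw [show U = fmap L A from hU]
    beta_reduce
    rw [recover_fmap hA]
    exact ⟨g A, hgmem A hA, rfl⟩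
  · intro U hU
    obtain ⟨A, hA, hU⟩ := hU
    rw [show U = fmap L A from hU, ← fmap_compl hL hA]
    beta_reduce
    rw [recover_fmap (hL.2.1 A hA),
      recover_fmap hA, hgcompl A hA, fmap_compl hK (hgmem A hA)]
  · intro U hU V hV hdisj
    obtain ⟨A, hA, hU⟩ := hU
    obtain ⟨B, hB, hV⟩ := hV
    rw [show U = fmap L A from hU, show V = fmap L B from hV] at hdisj ⊢
    beta_reduce
    have hAB : A ∩ B = ∅ := by
      by_contra h
      obtain ⟨x, hxA, hxB⟩ := Set.nonempty_iff_ne_empty.mpr h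
      have : (⟨eqClass L x, x, rfl⟩ : Ptilde L) ∈ fmap L A ∩ fmap L B :=
        ⟨eqClass_subset hA hxA, eqClass_subset hB hxB⟩
      rw [hdisj] at this
      exact this
    rw [← fmap_union hA hB, recover_fmap (hL.2.2 A hA B hB hAB), recover_fmap hA,
      recover_fmap hB, hgunion A hA B hB hAB, fmap_union (hgmem A hA) (hgmem B hB)]
  · intro A hA
    show fmap K (g (recoverSet L (fmap L A))) = fmap K (g A)
    rw [recover_fmap hA]
  · intro gt' _ hcomm U hU
    obtain ⟨A, hA, hU⟩ := hU
    show gt' U = fmap K (g (recoverSet L U))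
    rw [show U = fmap L A from hU, hcomm A hA, recover_fmap hA]
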